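/- For K ∈ Ω^{k+1}(M;TM), the operator i^h(K) commutes with h*, i.e. [i^h(K), h*] = i^h(K)∘h* − h*∘i^h(K) = 0, if and only if h∘K = K∘Λ^{k+1}h : Λ^{k+1}TM → TM. -/

import Mathlib

/-!
Graded derivations of the algebra of differential forms associated with a connection
(P. Michor).  We model vector fields on a smooth manifold `M` as derivations of the
commutative `ℝ`-algebra `A = C^∞(M, ℝ)` (realized inside `Module.End ℝ A`), and
differential forms (scalar valued, resp. tangent-bundle valued) as functions on lists of
vector fields which are alternating `A`-multilinear of a fixed degree.  All the operators
of the Frölicher-Nijenhuis calculus are defined by their classical global formulas.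
-/

noncomputable section

open scoped Manifold

variable (A : Type*) [CommRing A] [Algebra ℝ A]

/-- The carrier in which vector fields live: `ℝ`-linear endomorphisms of the functions. -/
abbrev Vec := Module.End ℝ A

/-- A vector field is a derivation of the algebra of (smooth) functions. -/
def IsVectorField (X : Vec A) : Prop := ∀ f g : A, X (f * g) = f * X g + g * X f

/-- Raw scalar differential forms: functions on lists of vector fields. -/
abbrev SF := List (Vec A) → A

/-- Raw tangent-bundle valued differential forms. -/
abbrev VF := List (Vec A) → Vec A

/-- All members of the list are genuine vector fields. -/
def VFList (ℓ : List (Vec A)) : Prop := ∀ X ∈ ℓ, IsVectorField A X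

/-- `ω` is a (scalar valued) differential `p`-form: it is supported on lists of length
`p`, it is `A`-multilinear and alternating (on vector fields). -/
structure IsSForm (p : ℕ) (ω : SF A) : Prop where
  support : ∀ ℓ, ℓ.length ≠ p → ω ℓ = 0
  map_add : ∀ l₁ (X Y : Vec A) l₂, VFList A l₁ → VFList A l₂ →
    IsVectorField A X → IsVectorField A Y →
    ω (l₁ ++ (X + Y) :: l₂) = ω (l₁ ++ X :: l₂) + ω (l₁ ++ Y :: l₂)
  map_smul : ∀ l₁ (f : A) (X : Vec A) l₂, VFList A l₁ → VFList A l₂ →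
    IsVectorField A X → ω (l₁ ++ (f • X) :: l₂) = f * ω (l₁ ++ X :: l₂)
  alternate : ∀ l₁ (X : Vec A) l₂ l₃, VFList A l₁ → VFList A l₂ → VFList A l₃ →
    IsVectorField A X → ω (l₁ ++ X :: l₂ ++ X :: l₃) = 0

/-- `K` is a tangent-bundle valued differential `p`-form, `K ∈ Ω^p(M; TM)`. -/
structure IsVForm (p : ℕ) (K : VF A) : Prop where
  support : ∀ ℓ, ℓ.length ≠ p → K ℓ = 0
  map_add : ∀ l₁ (X Y : Vec A) l₂, VFList A l₁ → VFList A l₂ →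
    IsVectorField A X → IsVectorField A Y →
    K (l₁ ++ (X + Y) :: l₂) = K (l₁ ++ X :: l₂) + K (l₁ ++ Y :: l₂)
  map_smul : ∀ l₁ (f : A) (X : Vec A) l₂, VFList A l₁ → VFList A l₂ →
    IsVectorField A X → K (l₁ ++ (f • X) :: l₂) = f • K (l₁ ++ X :: l₂)
  alternate : ∀ l₁ (X : Vec A) l₂ l₃, VFList A l₁ → VFList A l₂ → VFList A l₃ →
    IsVectorField A X → K (l₁ ++ X :: l₂ ++ X :: l₃) = 0
  vec : ∀ ℓ, VFList A ℓ → IsVectorField A (K ℓ)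

/-- A connection for a sub vector bundle `F ⊆ TM`:  a fiber linear projection
`φ : TM → F`, i.e. an idempotent `A`-linear operator on vector fields (whose image is the
space of sections of `F`). -/
structure IsConnection (φ : Vec A → Vec A) : Prop where
  vf : ∀ X, IsVectorField A X → IsVectorField A (φ X)
  idem : ∀ X, IsVectorField A X → φ (φ X) = φ X
  map_add : ∀ X Y, IsVectorField A X → IsVectorField A Y → φ (X + Y) = φ X + φ Y
  map_smul : ∀ (f : A) (X : Vec A), IsVectorField A X → φ (f • X) = f • φ X

/-- The horizontal projection `h = Id - φ` of a connection `φ`. -/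
def hpr (φ : Vec A → Vec A) : Vec A → Vec A := fun X => X - φ X

/-- A bundle endomorphism of `TM` (e.g. `φ` or `h`) viewed as a `1`-form in `Ω¹(M;TM)`. -/
def oneF (φ : Vec A → Vec A) : VF A := fun ℓ => match ℓ with
  | [X] => φ X
  | _ => 0

/-- The curvature `R ∈ Ω²(M;TM)` of the connection, `R(X,Y) = φ [hX, hY]`. -/
def curv (φ : Vec A → Vec A) : VF A := fun ℓ => match ℓ with
  | [X, Y] => φ ⁅hpr A φ X, hpr A φ Y⁆
  | _ => 0

/-- The cocurvature `R̄ ∈ Ω²(M;TM)` of the connection, `R̄(X,Y) = h [φX, φY]`. -/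
def cocurv (φ : Vec A → Vec A) : VF A := fun ℓ => match ℓ with
  | [X, Y] => hpr A φ ⁅φ X, φ Y⁆
  | _ => 0

/-- `h* : Ω(M) → Ω(M)`, `(h*ω)(X₁,…,X_p) = ω(hX₁,…,hX_p)`. -/
def hstar (φ : Vec A → Vec A) : SF A →ₗ[ℝ] SF A :=
  LinearMap.pi fun ℓ => LinearMap.proj (ℓ.map (hpr A φ))

/-- The exterior derivative, by the global (Koszul) formula. -/
def extd : SF A →ₗ[ℝ] SF A :=
  LinearMap.pi fun ℓ =>
    (∑ i : Fin ℓ.length, ((-1 : ℝ) ^ (i : ℕ)) •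
      ((ℓ.get i) ∘ₗ (LinearMap.proj (ℓ.eraseIdx (i : ℕ)) : SF A →ₗ[ℝ] A)))
    + ∑ i : Fin ℓ.length,
        ∑ j ∈ Finset.univ.filter (fun j : Fin ℓ.length => (i : ℕ) < (j : ℕ)),
          ((-1 : ℝ) ^ ((i : ℕ) + (j : ℕ))) •
            (LinearMap.proj ((⁅ℓ.get i, ℓ.get j⁆ : Vec A) ::
              ((ℓ.eraseIdx (j : ℕ)).eraseIdx (i : ℕ))) : SF A →ₗ[ℝ] A)

/-- The insertion operator `i(K) : Ω^p(M) → Ω^{p+k-1}(M)` of `K ∈ Ω^k(M;TM)`: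
`(i(K)ω)(X₁,…,X_n) = 1/(k! (n-k)!) ∑_σ ε(σ) ω(K(X_{σ1},…,X_{σk}), X_{σ(k+1)},…)`. -/
def insS (k : ℕ) (K : VF A) : SF A →ₗ[ℝ] SF A :=
  LinearMap.pi fun ℓ =>
    if hk : k ≤ ℓ.length then
      (((k.factorial * (ℓ.length - k).factorial : ℕ) : ℝ))⁻¹ •
        ∑ σ : Equiv.Perm (Fin ℓ.length),
          (((Equiv.Perm.sign σ : ℤ) : ℝ)) •
            (LinearMap.proj
              ((K (List.ofFn fun m : Fin k => ℓ.get (σ (Fin.castLE hk m)))) ::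
                List.ofFn fun m : Fin (ℓ.length - k) =>
                  ℓ.get (σ ⟨k + (m : ℕ), by have := m.isLt; omega⟩)) : SF A →ₗ[ℝ] A)
    else 0

/-- The insertion operator over `h*`:  `i^h(K)` of `K ∈ Ω^k(M;TM)`, given by
`(i^h(K)ω)(X₁,…,X_n) = 1/(k! (n-k)!) ∑_σ ε(σ) ω(K(X_{σ1},…,X_{σk}), hX_{σ(k+1)},…)`. -/
def insH (φ : Vec A → Vec A) (k : ℕ) (K : VF A) : SF A →ₗ[ℝ] SF A :=
  LinearMap.pi fun ℓ =>
    if hk : k ≤ ℓ.length then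
      (((k.factorial * (ℓ.length - k).factorial : ℕ) : ℝ))⁻¹ •
        ∑ σ : Equiv.Perm (Fin ℓ.length),
          (((Equiv.Perm.sign σ : ℤ) : ℝ)) •
            (LinearMap.proj
              ((K (List.ofFn fun m : Fin k => ℓ.get (σ (Fin.castLE hk m)))) ::
                List.ofFn fun m : Fin (ℓ.length - k) =>
                  hpr A φ (ℓ.get (σ ⟨k + (m : ℕ), by have := m.isLt; omega⟩))) : SF A →ₗ[ℝ] A)
    else 0

/-- Insertion `i(K)T` of `K ∈ Ω^k(M;TM)` into a vector valued form `T`. -/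
def insVV (k : ℕ) (K : VF A) (T : VF A) : VF A := fun ℓ =>
  if hk : k ≤ ℓ.length then
    (((k.factorial * (ℓ.length - k).factorial : ℕ) : ℝ))⁻¹ •
      ∑ σ : Equiv.Perm (Fin ℓ.length),
        (((Equiv.Perm.sign σ : ℤ) : ℝ)) •
          T ((K (List.ofFn fun m : Fin k => ℓ.get (σ (Fin.castLE hk m)))) ::
              List.ofFn fun m : Fin (ℓ.length - k) =>
                ℓ.get (σ ⟨k + (m : ℕ), by have := m.isLt; omega⟩))
  else 0

/-- Insertion over `h*`, `i^h(K)T`, of `K ∈ Ω^k(M;TM)` into a vector valued form `T`. -/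
def insHVV (φ : Vec A → Vec A) (k : ℕ) (K : VF A) (T : VF A) : VF A := fun ℓ =>
  if hk : k ≤ ℓ.length then
    (((k.factorial * (ℓ.length - k).factorial : ℕ) : ℝ))⁻¹ •
      ∑ σ : Equiv.Perm (Fin ℓ.length),
        (((Equiv.Perm.sign σ : ℤ) : ℝ)) •
          T ((K (List.ofFn fun m : Fin k => ℓ.get (σ (Fin.castLE hk m)))) ::
              List.ofFn fun m : Fin (ℓ.length - k) =>
                hpr A φ (ℓ.get (σ ⟨k + (m : ℕ), by have := m.isLt; omega⟩)))
  else 0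

/-- The Lie derivative `Θ(K) = [i(K), d]` along `K ∈ Ω^k(M;TM)`. -/
def theta (k : ℕ) (K : VF A) : SF A →ₗ[ℝ] SF A :=
  insS A k K ∘ₗ extd A - ((-1 : ℝ) ^ (k + 1)) • (extd A ∘ₗ insS A k K)

/-- `Θ^h(K) = h* ∘ Θ(K) ∘ h*`. -/
def thetaH (φ : Vec A → Vec A) (k : ℕ) (K : VF A) : SF A →ₗ[ℝ] SF A :=
  hstar A φ ∘ₗ theta A k K ∘ₗ hstar A φ

/-- A function, viewed as a `0`-form. -/
def constF : A →ₗ[ℝ] SF A where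
  toFun f := fun ℓ => match ℓ with
    | [] => f
    | _ => 0
  map_add' f g := by funext ℓ; cases ℓ <;> simp
  map_smul' r f := by funext ℓ; cases ℓ <;> simp

/-- The Frölicher-Nijenhuis bracket `[K, L] ∈ Ω^{k+l}(M;TM)` of `K ∈ Ω^k(M;TM)` and
`L ∈ Ω^l(M;TM)`, characterized by `Θ([K,L]) = [Θ(K), Θ(L)]` via
`[K,L](X₁,…,X_{k+l}) f = ([Θ(K),Θ(L)] f)(X₁,…,X_{k+l})`. -/
def fnb (k l : ℕ) (K L : VF A) : VF A := fun ℓ =>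
  LinearMap.proj ℓ ∘ₗ
    (theta A k K ∘ₗ theta A l L - ((-1 : ℝ) ^ (k * l)) • (theta A l L ∘ₗ theta A k K)) ∘ₗ
      constF A

/-- Wedge product of a scalar `p`-form with a scalar form. -/
def wedgeSS (p : ℕ) (ω ψ : SF A) : SF A := fun ℓ =>
  if hp : p ≤ ℓ.length then
    (((p.factorial * (ℓ.length - p).factorial : ℕ) : ℝ))⁻¹ •
      ∑ σ : Equiv.Perm (Fin ℓ.length),
        (((Equiv.Perm.sign σ : ℤ) : ℝ)) •
          (ω (List.ofFn fun m : Fin p => ℓ.get (σ (Fin.castLE hp m))) *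
            ψ (List.ofFn fun m : Fin (ℓ.length - p) =>
                ℓ.get (σ ⟨p + (m : ℕ), by have := m.isLt; omega⟩)))
  else 0

/-- Wedge product of a scalar `p`-form with a vector valued form. -/
def wedgeSV (p : ℕ) (ω : SF A) (K : VF A) : VF A := fun ℓ =>
  if hp : p ≤ ℓ.length then
    (((p.factorial * (ℓ.length - p).factorial : ℕ) : ℝ))⁻¹ •
      ∑ σ : Equiv.Perm (Fin ℓ.length),
        (((Equiv.Perm.sign σ : ℤ) : ℝ)) •
          (ω (List.ofFn fun m : Fin p => ℓ.get (σ (Fin.castLE hp m))) •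
            K (List.ofFn fun m : Fin (ℓ.length - p) =>
                ℓ.get (σ ⟨p + (m : ℕ), by have := m.isLt; omega⟩)))
  else 0

/-- `K ∘ Λh`: precompose each argument of a vector valued form with `h`. -/
def precH (φ : Vec A → Vec A) (K : VF A) : VF A := fun ℓ => K (ℓ.map (hpr A φ))

/-- `h ∘ K`: postcompose the values of a vector valued form with `h`. -/
def postH (φ : Vec A → Vec A) (K : VF A) : VF A := fun ℓ => hpr A φ (K ℓ)

/-- `φ ∘ K`: postcompose the values of a vector valued form with `φ`. -/
def postP (φ : Vec A → Vec A) (K : VF A) : VF A := fun ℓ => φ (K ℓ)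

/-- Equality of vector valued forms (tested on vector fields). -/
def VEq (K L : VF A) : Prop := ∀ ℓ, VFList A ℓ → K ℓ = L ℓ

/-- Equality of operators on `Ω(M)` (tested on genuine forms and vector fields). -/
def OpEq (D₁ D₂ : SF A →ₗ[ℝ] SF A) : Prop :=
  ∀ (p : ℕ) (ω : SF A), IsSForm A p ω → ∀ ℓ, VFList A ℓ → D₁ ω ℓ = D₂ ω ℓ

/-- A scalar form is horizontal: it is killed by insertion of any vertical vector. -/
def HorS (φ : Vec A → Vec A) (ω : SF A) : Prop :=
  ∀ l₁ (Y : Vec A) l₂, IsVectorField A Y → ω (l₁ ++ φ Y :: l₂) = 0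

/-- A vector valued form is horizontal: it is killed by any vertical argument. -/
def HorV (φ : Vec A → Vec A) (K : VF A) : Prop :=
  ∀ l₁ (Y : Vec A) l₂, IsVectorField A Y → K (l₁ ++ φ Y :: l₂) = 0

/-- `K ∈ Ω^k(M;TM)^h`, i.e. `h ∘ K = K ∘ Λ^k h`. -/
def EquivH (φ : Vec A → Vec A) (K : VF A) : Prop :=
  ∀ ℓ, VFList A ℓ → hpr A φ (K ℓ) = K (ℓ.map (hpr A φ))

/-- `D` is a graded derivation of `Ω(M)` over `h*` of degree `k`:
`D(ω ∧ ψ) = Dω ∧ h*ψ + (-1)^{k·|ω|} h*ω ∧ Dψ`. -/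
structure IsDerOverH (φ : Vec A → Vec A) (k : ℕ) (D : SF A →ₗ[ℝ] SF A) : Prop where
  degree : ∀ p ω, IsSForm A p ω → IsSForm A (p + k) (D ω)
  leibniz : ∀ (p q : ℕ) (ω ψ : SF A), IsSForm A p ω → IsSForm A q ψ →
    D (wedgeSS A p ω ψ) = wedgeSS A (p + k) (D ω) (hstar A φ ψ)
      + ((-1 : ℝ) ^ (k * p)) • wedgeSS A p (hstar A φ ω) (D ψ)

/-- `D` commutes with `h*` (i.e. `[D, h*] = 0` on `Ω(M)`). -/
def CommutesWithHstar (φ : Vec A → Vec A) (D : SF A →ₗ[ℝ] SF A) : Prop :=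
  ∀ (p : ℕ) (ω : SF A), IsSForm A p ω → ∀ ℓ, VFList A ℓ →
    D (hstar A φ ω) ℓ = hstar A φ (D ω) ℓ

/-- `D` is algebraic: it vanishes on `Ω⁰(M)`. -/
def AlgebraicDer (D : SF A →ₗ[ℝ] SF A) : Prop := ∀ ω : SF A, IsSForm A 0 ω → D ω = 0

/-- The bracket `[K,L]^{∧,h} = i^h(K)L - (-1)^{kl} i^h(L)K` on `Ω^{*+1}(M;TM)^h`,
for `K ∈ Ω^{k+1}(M;TM)^h` and `L ∈ Ω^{l+1}(M;TM)^h`. -/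
def hookBr (φ : Vec A → Vec A) (k l : ℕ) (K L : VF A) : VF A :=
  insHVV A φ (k + 1) K L - ((-1 : ℝ) ^ (k * l)) • insHVV A φ (l + 1) L K

/-- The classical covariant derivative `D^h = h* ∘ d`. -/
def covD (φ : Vec A → Vec A) : SF A →ₗ[ℝ] SF A := hstar A φ ∘ₗ extd A

/-- The covariant derivative `d^h = h* ∘ d ∘ h*`. -/
def covd (φ : Vec A → Vec A) : SF A →ₗ[ℝ] SF A := hstar A φ ∘ₗ extd A ∘ₗ hstar A φ

end

/-- The commutative `ℝ`-algebra of smooth real valued functions on a manifold `M`. -/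
abbrev SmoothFns {EM : Type*} [NormedAddCommGroup EM] [NormedSpace ℝ EM]
    {HM : Type*} [TopologicalSpace HM] (IM : ModelWithCorners ℝ EM HM)
    (M : Type*) [TopologicalSpace M] [ChartedSpace HM M] : Type _ :=
  ContMDiffMap IM (modelWithCornersSelf ℝ ℝ) M ℝ (⊤ : ℕ∞)

/-!
If `h ∘ K = K ∘ Λh`, then in each summand of `i^h(K)(h*ω)` the `h` applied to the value of `K`
can be moved onto its arguments, which gives the corresponding summand of `i^h(K)ω` evaluated
on `hX₁, …, hXₙ`. Conversely, on exactly `k + 1` vector fields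
`i^h(K)ω = ω(K(X₁, …, X_{k+1}))` for a `1`-form `ω`, since `K` is alternating; testing the
commutation relation on the `1`-forms `df` gives `(h K(X)) f = K(hX) f` for every function `f`.
-/

section

variable {A : Type*} [CommRing A] [Algebra ℝ A]

variable (A) in
def vectorFields : Submodule A (Vec A) where
  carrier := {X | IsVectorField A X}
  zero_mem' f g := by simp
  add_mem' {X Y} hX hY f g := by
    simp only [LinearMap.add_apply, hX f g, hY f g]
    ring
  smul_mem' c X hX f g := by
    simp only [LinearMap.smul_apply, hX f g, smul_eq_mul]
    ring

theorem List.ofFn_update_eq_take_append_cons_drop {α β : Type*} {n : ℕ} [DecidableEq (Fin n)]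
    (g : α → β) (v : Fin n → α) (i : Fin n) (x : α) :
    List.ofFn (fun j => g (Function.update v i x j)) =
      (List.ofFn fun j => g (v j)).take i ++ g x :: (List.ofFn fun j => g (v j)).drop (i + 1) := by
  rw [← List.set_eq_take_append_cons_drop.trans (if_pos (by simp))]
  apply List.ext_getElem (by simp)
  intro j _ _
  simp only [List.getElem_ofFn, List.getElem_set, Function.update_apply, Fin.ext_iff, eq_comm]
  split_ifs <;> rfl

theorem List.eq_take_append_cons_append_cons_drop {α : Type*} (l : List α) {i j : ℕ}
    (hij : i < j) (hj : j < l.length) :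
    l = l.take i ++ l[i] :: (l.drop (i + 1)).take (j - (i + 1)) ++ l[j] :: l.drop (j + 1) := by
  conv_lhs => rw [← List.take_append_drop i l, List.drop_eq_getElem_cons (by omega),
    ← List.take_append_drop (j - (i + 1)) (l.drop (i + 1)), List.drop_drop,
    Nat.add_sub_cancel' (by omega : i + 1 ≤ j), List.drop_eq_getElem_cons hj]
  simp

theorem VFList.of_subset {l m : List (Vec A)} (hm : VFList A m) (hs : l ⊆ m) : VFList A l :=
  fun X hX => hm X (hs hX)

theorem vfList_ofFn {n : ℕ} {X : Fin n → Vec A} (hX : ∀ i, IsVectorField A (X i)) :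
    VFList A (List.ofFn X) := by
  intro Y hY
  obtain ⟨i, rfl⟩ := List.mem_ofFn.1 hY
  exact hX i

variable {p : ℕ} {K : VF A}

def IsVForm.alternatingMap (hK : IsVForm A p K) (n : ℕ) :
    vectorFields A [⋀^Fin n]→ₗ[A] Vec A where
  toFun v := K (List.ofFn fun i => (v i : Vec A))
  map_update_add' v i X Y := by
    simp only [List.ofFn_update_eq_take_append_cons_drop, Submodule.coe_add]
    exact hK.map_add _ _ _ _ ((vfList_ofFn fun i => (v i).2).of_subset (List.take_subset _ _))
      ((vfList_ofFn fun i => (v i).2).of_subset (List.drop_subset _ _)) X.2 Y.2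
  map_update_smul' v i c X := by
    simp only [List.ofFn_update_eq_take_append_cons_drop, Submodule.coe_smul]
    exact hK.map_smul _ _ _ _ ((vfList_ofFn fun i => (v i).2).of_subset (List.take_subset _ _))
      ((vfList_ofFn fun i => (v i).2).of_subset (List.drop_subset _ _)) X.2
  map_eq_zero_of_eq' v i j hv hij := by
    wlog hlt : i < j generalizing i j
    · exact this j i hv.symm hij.symm (lt_of_le_of_ne (not_lt.1 hlt) hij.symm)
    set l := List.ofFn fun i => (v i : Vec A)
    have hl : VFList A l := vfList_ofFn fun i => (v i).2
    have hli : l[(i : ℕ)]'(by simp [l]) = v i := by simp [l]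
    have hlj : l[(j : ℕ)]'(by simp [l]) = v i := by simp [l, hv]
    rw [l.eq_take_append_cons_append_cons_drop hlt (by simp [l]), hli, hlj]
    exact hK.alternate _ _ _ _ (hl.of_subset (List.take_subset _ _))
      (hl.of_subset (List.Subset.trans (List.take_subset _ _) (List.drop_subset _ _)))
      (hl.of_subset (List.drop_subset _ _)) (v i).2

theorem IsVForm.apply_ofFn_perm (hK : IsVForm A p K) {n : ℕ} (X : Fin n → Vec A)
    (hX : ∀ i, IsVectorField A (X i)) (σ : Equiv.Perm (Fin n)) :
    K (List.ofFn (X ∘ σ)) = Equiv.Perm.sign σ • K (List.ofFn X) :=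
  (hK.alternatingMap n).map_perm (fun i => ⟨X i, hX i⟩) σ

@[simp]
theorem hstar_apply (φ : Vec A → Vec A) (ω : SF A) (ℓ : List (Vec A)) :
    hstar A φ ω ℓ = ω (ℓ.map (hpr A φ)) := rfl

namespace IsConnection

variable {φ : Vec A → Vec A} (hφ : IsConnection A φ)
include hφ

theorem isVectorField_hpr {X : Vec A} (hX : IsVectorField A X) : IsVectorField A (hpr A φ X) :=
  (vectorFields A).sub_mem hX (hφ.vf X hX)

theorem hpr_zero : hpr A φ 0 = 0 := by
  simpa [hpr] using hφ.map_smul 0 0 (vectorFields A).zero_mem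

theorem hpr_add {X Y : Vec A} (hX : IsVectorField A X) (hY : IsVectorField A Y) :
    hpr A φ (X + Y) = hpr A φ X + hpr A φ Y := by
  simp only [hpr, hφ.map_add X Y hX hY]
  abel

theorem hpr_smul (f : A) {X : Vec A} (hX : IsVectorField A X) :
    hpr A φ (f • X) = f • hpr A φ X := by
  simp only [hpr, hφ.map_smul f X hX, smul_sub]

theorem vfList_map_hpr {l : List (Vec A)} (hl : VFList A l) : VFList A (l.map (hpr A φ)) := by
  intro Y hY
  obtain ⟨X, hX, rfl⟩ := List.mem_map.1 hY
  exact hφ.isVectorField_hpr (hl X hX)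

theorem isSForm_hstar {p : ℕ} {ω : SF A} (hω : IsSForm A p ω) :
    IsSForm A p (hstar A φ ω) where
  support ℓ h := hω.support _ (by simpa using h)
  map_add l₁ X Y l₂ h₁ h₂ hX hY := by
    change ω (List.map _ _) = ω (List.map _ _) + ω (List.map _ _)
    simp only [List.map_append, List.map_cons, hφ.hpr_add hX hY]
    exact hω.map_add _ _ _ _ (hφ.vfList_map_hpr h₁) (hφ.vfList_map_hpr h₂)
      (hφ.isVectorField_hpr hX) (hφ.isVectorField_hpr hY)
  map_smul l₁ f X l₂ h₁ h₂ hX := by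
    change ω (List.map _ _) = f * ω (List.map _ _)
    simp only [List.map_append, List.map_cons, hφ.hpr_smul f hX]
    exact hω.map_smul _ _ _ _ (hφ.vfList_map_hpr h₁) (hφ.vfList_map_hpr h₂)
      (hφ.isVectorField_hpr hX)
  alternate l₁ X l₂ l₃ h₁ h₂ h₃ hX := by
    change ω (List.map _ _) = 0
    simp only [List.map_append, List.map_cons]
    exact hω.alternate _ _ _ _ (hφ.vfList_map_hpr h₁) (hφ.vfList_map_hpr h₂)
      (hφ.vfList_map_hpr h₃) (hφ.isVectorField_hpr hX)

end IsConnection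

def differential (f : A) : SF A
  | [X] => X f
  | _ => 0

theorem differential_of_length_ne_one (f : A) {ℓ : List (Vec A)} (h : ℓ.length ≠ 1) :
    differential f ℓ = 0 := by
  match ℓ, h with
  | [], _ => rfl
  | _ :: _ :: _, _ => rfl

theorem isSForm_differential (f : A) : IsSForm A 1 (differential f) := by
  have hsingle : ∀ (l₁ l₂ : List (Vec A)), (l₁ = [] ∧ l₂ = []) ∨ ∀ X : Vec A,
      differential f (l₁ ++ X :: l₂) = 0 := by
    intro l₁ l₂
    by_cases h : l₁.length + l₂.length = 0
    · simp_all
    · exact Or.inr fun X => differential_of_length_ne_one f (by simp; omega)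
  refine ⟨fun ℓ => differential_of_length_ne_one f, ?_, ?_, ?_⟩
  · intro l₁ X Y l₂ _ _ _ _
    rcases hsingle l₁ l₂ with ⟨rfl, rfl⟩ | h
    · simp [differential]
    · simp [h]
  · intro l₁ g X l₂ _ _ _
    rcases hsingle l₁ l₂ with ⟨rfl, rfl⟩ | h
    · simp [differential]
    · simp [h]
  · intro l₁ X l₂ l₃ _ _ _ _
    exact differential_of_length_ne_one f (by simp; omega)

theorem insH_apply_eq_sum_perm (φ : Vec A → Vec A) (k : ℕ) (K : VF A) (ω : SF A)
    {ℓ : List (Vec A)} {n : ℕ} (hn : ℓ.length = n) (hk : k ≤ n) :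
    insH A φ k K ω ℓ = ((k.factorial * (n - k).factorial : ℕ) : ℝ)⁻¹ •
      ∑ σ : Equiv.Perm (Fin n), ((Equiv.Perm.sign σ : ℤ) : ℝ) •
        ω (K (List.ofFn fun m : Fin k => ℓ[(σ (Fin.castLE hk m) : ℕ)]) ::
          List.ofFn fun m : Fin (n - k) => hpr A φ ℓ[(σ ⟨k + m, by omega⟩ : ℕ)]) := by
  subst hn
  simp only [insH, LinearMap.pi_apply, dif_pos hk, LinearMap.smul_apply, LinearMap.sum_apply,
    LinearMap.proj_apply]
  rfl

theorem insH_apply_of_length_lt (φ : Vec A → Vec A) (k : ℕ) (K : VF A) (ω : SF A)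
    {ℓ : List (Vec A)} (hk : ℓ.length < k) : insH A φ k K ω ℓ = 0 := by
  simp only [insH, LinearMap.pi_apply, dif_neg (not_le.2 hk)]
  rfl

theorem IsSForm.apply_units_smul_singleton {p : ℕ} {ω : SF A} (hω : IsSForm A p ω)
    (s : ℤˣ) {X : Vec A} (hX : IsVectorField A X) : ω [s • X] = (s : ℤ) • ω [X] := by
  have hadd := hω.map_add [] X (-X) [] (by simp [VFList]) (by simp [VFList]) hX
    ((vectorFields A).neg_mem hX)
  have hzero := hω.map_smul [] 0 0 [] (by simp [VFList]) (by simp [VFList])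
    (vectorFields A).zero_mem
  simp only [List.nil_append, add_neg_cancel, zero_smul, zero_mul] at hadd hzero
  rcases Int.units_eq_one_or s with rfl | rfl
  · simp
  · simp only [Units.neg_smul, one_smul, Units.val_neg, Units.val_one, neg_smul]
    linear_combination hzero - hadd

theorem insH_apply_of_length_eq_degree (φ : Vec A → Vec A) {k : ℕ} {K : VF A}
    (hK : IsVForm A k K) {p : ℕ} {ω : SF A} (hω : IsSForm A p ω) {ℓ : List (Vec A)}
    (hℓ : VFList A ℓ) (hlen : ℓ.length = k) : insH A φ k K ω ℓ = ω [K ℓ] := by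
  set X : Fin k → Vec A := fun i => ℓ[(i : ℕ)]
  have hℓX : List.ofFn X = ℓ := List.ext_getElem (by simp [hlen]) (by simp [X])
  have hX : ∀ i, IsVectorField A (X i) := fun i => hℓ _ (List.getElem_mem _)
  have hterm : ∀ σ : Equiv.Perm (Fin k), ((Equiv.Perm.sign σ : ℤ) : ℝ) •
      ω (K (List.ofFn fun m : Fin k => ℓ[(σ (Fin.castLE le_rfl m) : ℕ)]) ::
        List.ofFn fun m : Fin (k - k) => hpr A φ ℓ[(σ ⟨k + m, by omega⟩ : ℕ)]) = ω [K ℓ] := by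
    intro σ
    have hK' : K (List.ofFn fun m : Fin k => ℓ[(σ (Fin.castLE le_rfl m) : ℕ)])
        = Equiv.Perm.sign σ • K ℓ :=
      (hK.apply_ofFn_perm X hX σ).trans (by rw [hℓX])
    rw [hK', List.ofFn_eq_nil_iff.2 (Nat.sub_self k),
      hω.apply_units_smul_singleton _ (hK.vec ℓ hℓ), Int.cast_smul_eq_zsmul, smul_smul,
      ← Units.val_mul, Int.units_mul_self, Units.val_one, one_smul]
  rw [insH_apply_eq_sum_perm φ k K ω hlen le_rfl, Finset.sum_congr rfl fun σ _ => hterm σ,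
    Finset.sum_const, Finset.card_univ, Fintype.card_perm, Fintype.card_fin, Nat.sub_self,
    Nat.factorial_zero, mul_one, ← Nat.cast_smul_eq_nsmul ℝ, smul_smul,
    inv_mul_cancel₀ (Nat.cast_ne_zero.2 k.factorial_ne_zero), one_smul]

theorem insH_hstar_apply_of_postH_eq_precH {φ : Vec A → Vec A} {k : ℕ} {K : VF A}
    (hV : VEq A (postH A φ K) (precH A φ K)) (ω : SF A) {ℓ : List (Vec A)} (hℓ : VFList A ℓ) :
    insH A φ k K (hstar A φ ω) ℓ = hstar A φ (insH A φ k K ω) ℓ := by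
  rw [hstar_apply]
  by_cases hk : k ≤ ℓ.length
  · rw [insH_apply_eq_sum_perm φ k K _ rfl hk,
      insH_apply_eq_sum_perm φ k K ω (List.length_map _) hk]
    refine congrArg _ (Finset.sum_congr rfl fun σ _ => congrArg _ ?_)
    rw [hstar_apply, List.map_cons, show hpr A φ (K _) = K _ from
      hV _ (vfList_ofFn fun _ => hℓ _ (List.getElem_mem _))]
    simp [List.map_ofFn, Function.comp_def]
  · rw [insH_apply_of_length_lt φ k K _ (not_le.1 hk),
      insH_apply_of_length_lt φ k K ω (by simpa using hk)]

end

theorem insH_commutes_with_hstar_iff_general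
    {EM : Type*} [NormedAddCommGroup EM] [NormedSpace ℝ EM]
    {HM : Type*} [TopologicalSpace HM] {IM : ModelWithCorners ℝ EM HM}
    {M : Type*} [TopologicalSpace M] [ChartedSpace HM M]
    (φ : Vec (SmoothFns IM M) → Vec (SmoothFns IM M))
    (hφ : IsConnection (SmoothFns IM M) φ)
    (k : ℕ) (K : VF (SmoothFns IM M)) (hK : IsVForm (SmoothFns IM M) (k + 1) K) :
    (∀ (p : ℕ) (ω : SF (SmoothFns IM M)), IsSForm (SmoothFns IM M) p ω → ∀ ℓ, VFList (SmoothFns IM M) ℓ →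
        insH (SmoothFns IM M) φ (k + 1) K (hstar (SmoothFns IM M) φ ω) ℓ = hstar (SmoothFns IM M) φ (insH (SmoothFns IM M) φ (k + 1) K ω) ℓ)
      ↔ VEq (SmoothFns IM M) (postH (SmoothFns IM M) φ K) (precH (SmoothFns IM M) φ K) := by
  refine ⟨fun H ℓ hℓ => ?_, fun hV _ ω _ _ hℓ => insH_hstar_apply_of_postH_eq_precH hV ω hℓ⟩
  by_cases hlen : ℓ.length = k + 1
  · refine LinearMap.ext fun f => ?_
    have hf := H 1 (differential f) (isSForm_differential f) ℓ hℓ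
    rwa [insH_apply_of_length_eq_degree φ hK (hφ.isSForm_hstar (isSForm_differential f)) hℓ hlen,
      hstar_apply, hstar_apply,
      insH_apply_of_length_eq_degree φ hK (isSForm_differential f) (hφ.vfList_map_hpr hℓ)
        (by simpa using hlen)] at hf
  · rw [postH, precH, hK.support ℓ hlen, hφ.hpr_zero, hK.support _ (by simpa using hlen)]

/-- **Lemma 2.3.2.**  For `K ∈ Ω^{k+1}(M;TM)`, the operator `i^h(K)` commutes with `h*`,
i.e. `[i^h(K), h*] = 0`, if and only if `h ∘ K = K ∘ Λ^{k+1}h`. -/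
theorem insH_commutes_with_hstar_iff
    {EM : Type*} [NormedAddCommGroup EM] [NormedSpace ℝ EM]
    {HM : Type*} [TopologicalSpace HM] {IM : ModelWithCorners ℝ EM HM}
    {M : Type*} [TopologicalSpace M] [ChartedSpace HM M] [IsManifold IM (⊤ : ℕ∞) M]
    (φ : Vec (SmoothFns IM M) → Vec (SmoothFns IM M))
    (hφ : IsConnection (SmoothFns IM M) φ)
    (k : ℕ) (K : VF (SmoothFns IM M)) (hK : IsVForm (SmoothFns IM M) (k + 1) K) :
    (∀ (p : ℕ) (ω : SF (SmoothFns IM M)), IsSForm (SmoothFns IM M) p ω → ∀ ℓ, VFList (SmoothFns IM M) ℓ →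
        insH (SmoothFns IM M) φ (k + 1) K (hstar (SmoothFns IM M) φ ω) ℓ = hstar (SmoothFns IM M) φ (insH (SmoothFns IM M) φ (k + 1) K ω) ℓ)
      ↔ VEq (SmoothFns IM M) (postH (SmoothFns IM M) φ K) (precH (SmoothFns IM M) φ K) :=
  insH_commutes_with_hstar_iff_general φ hφ k K hK
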